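/- arXiv:1307.2672 — 3 statements merged into one kernel-verified Lean document; each statement's English description precedes it below -/
import Mathlib

section
/- Consider k circles in the plane with centers p₁,…,p_k and radii r₁,…,r_k forming a d-ply system (every point of the plane lies in at most d of the closed disks). Suppose the intersection graph of these disks is 9d-inductive, i.e., there is an ordering of the disks such that each disk intersects at most 9d disks later in the ordering. Then the number of subsets S of the disks such that all disks in S have a common point is at most k · d · C(9d, d−1). -/
/-!
Order the disks by `f`. An intersecting set `S` is `insert i T`, where `i` is its `f`-least
disk and `T` is a set of later neighbours of `i`; by the ply bound `|S| ≤ d`, so `|T| < d`.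
With at most `9d` later neighbours, `i` admits at most `∑_{j<d} C(9d, j) ≤ d · C(9d, d-1)` such
`T`, since `C(n, ·)` increases up to `n / 2`.
-/

open Metric Finset

theorem Nat.choose_le_choose_of_le_of_le_half {n a b : ℕ} (hab : a ≤ b) (hb : b ≤ n / 2) :
    n.choose a ≤ n.choose b := by
  induction b, hab using Nat.le_induction with
  | base => rfl
  | succ b _ ih => exact (ih (by omega)).trans (Nat.choose_le_succ_of_lt_half_left (by omega))

theorem Finset.card_filter_powerset_card_lt_le {α : Type*} {N : Finset α} {m d : ℕ}
    (hN : #N ≤ m) (hd : d - 1 ≤ m / 2) :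
    #(N.powerset.filter (#· < d)) ≤ d * m.choose (d - 1) := by
  classical
  calc #(N.powerset.filter (#· < d))
      ≤ #((range d).biUnion fun j => N.powersetCard j) := by
        refine card_le_card fun T hT => ?_
        rw [mem_filter, mem_powerset] at hT
        exact mem_biUnion.mpr ⟨#T, mem_range.mpr hT.2, mem_powersetCard.mpr ⟨hT.1, rfl⟩⟩
    _ ≤ ∑ j ∈ range d, #(N.powersetCard j) := card_biUnion_le
    _ ≤ ∑ _j ∈ range d, m.choose (d - 1) := by
        refine sum_le_sum fun j hj => ?_
        rw [card_powersetCard]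
        exact (Nat.choose_le_choose j hN).trans
          (Nat.choose_le_choose_of_le_of_le_half (by rw [mem_range] at hj; omega) hd)
    _ = d * m.choose (d - 1) := by rw [sum_const, card_range, smul_eq_mul]

section IntersectingSets

variable {α ι β : Type*} (s : ι → Set α)

theorem Finset.card_le_of_biInter_nonempty [Finite ι] {d : ℕ}
    (hply : ∀ x, {i | x ∈ s i}.ncard ≤ d) {S : Finset ι} (hS : (⋂ i ∈ S, s i).Nonempty) :
    #S ≤ d := by
  obtain ⟨x, hx⟩ := hS
  rw [← Set.ncard_coe_finset]
  exact (Set.ncard_le_ncard (fun i hi => Set.mem_iInter₂.mp hx i hi)).trans (hply x)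

theorem Finset.coe_erase_subset_upperNeighbors_of_forall_le [DecidableEq ι] [LinearOrder β]
    {f : ι → β} (hf : Function.Injective f) {S : Finset ι} (hS : (⋂ i ∈ S, s i).Nonempty)
    {i : ι} (hi : i ∈ S) (hmin : ∀ j ∈ S, f i ≤ f j) :
    ↑(S.erase i) ⊆ {j | f i < f j ∧ (s i ∩ s j).Nonempty} := by
  obtain ⟨x, hx⟩ := hS
  intro j hj
  obtain ⟨hji, hjS⟩ := mem_erase.mp hj
  exact ⟨(hmin j hjS).lt_of_ne fun h => hji (hf h).symm,
    x, Set.mem_iInter₂.mp hx i hi, Set.mem_iInter₂.mp hx j hjS⟩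

theorem ncard_intersectingSets_le [Fintype ι] [LinearOrder β] {f : ι → β}
    (hf : Function.Injective f) {d m : ℕ} (hply : ∀ x, {i | x ∈ s i}.ncard ≤ d)
    (hdeg : ∀ i, {j | f i < f j ∧ (s i ∩ s j).Nonempty}.ncard ≤ m) (hdm : d - 1 ≤ m / 2) :
    {S : Finset ι | S.Nonempty ∧ (⋂ i ∈ S, s i).Nonempty}.ncard
      ≤ Fintype.card ι * (d * m.choose (d - 1)) := by
  classical
  let N i := {j | f i < f j ∧ (s i ∩ s j).Nonempty}.toFinset
  let B := univ.filter fun S : Finset ι => S.Nonempty ∧ (⋂ i ∈ S, s i).Nonempty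
  have hcover : B ⊆ univ.biUnion fun i => ((N i).powerset.filter (#· < d)).image (insert i) := by
    intro S hS
    obtain ⟨hne, hinter⟩ := (mem_filter.mp hS).2
    obtain ⟨i, hi, hmin⟩ := S.exists_min_image f hne
    refine mem_biUnion.mpr ⟨i, mem_univ i, mem_image.mpr ⟨S.erase i, ?_, insert_erase hi⟩⟩
    refine mem_filter.mpr ⟨mem_powerset.mpr ?_, ?_⟩
    · exact Set.subset_toFinset.mpr
        (S.coe_erase_subset_upperNeighbors_of_forall_le s hf hinter hi hmin)
    · rw [card_erase_of_mem hi]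
      have := S.card_le_of_biInter_nonempty s hply hinter
      have := hne.card_pos
      omega
  have hB : {S : Finset ι | S.Nonempty ∧ (⋂ i ∈ S, s i).Nonempty} = ↑B := by ext; simp [B]
  calc {S : Finset ι | S.Nonempty ∧ (⋂ i ∈ S, s i).Nonempty}.ncard = #B := by
        rw [hB, Set.ncard_coe_finset]
    _ ≤ ∑ i, #(((N i).powerset.filter (#· < d)).image (insert i)) :=
        (card_le_card hcover).trans card_biUnion_le
    _ ≤ ∑ _i : ι, d * m.choose (d - 1) := by
        refine sum_le_sum fun i _ => card_image_le.trans
          (card_filter_powerset_card_lt_le ?_ hdm)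
        rw [← Set.ncard_eq_toFinset_card']
        exact hdeg i
    _ = Fintype.card ι * (d * m.choose (d - 1)) := by rw [sum_const, card_univ, smul_eq_mul]

end IntersectingSets

/-- Consider `k` closed disks in the plane forming a `d`-ply system (every point lies in
at most `d` of the disks), whose intersection graph is `9d`-inductive (witnessed by an
injective numbering `f` such that each disk intersects at most `9d` disks with larger
numbers). Then the number of nonempty subsets of disks with a common point is at most
`k * d * C(9d, d-1)`. -/
theorem count_intersecting_sets_dply (k d : ℕ)
    (p : Fin k → EuclideanSpace ℝ (Fin 2)) (r : Fin k → ℝ)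
    (hply : ∀ x : EuclideanSpace ℝ (Fin 2),
      {i : Fin k | x ∈ closedBall (p i) (r i)}.ncard ≤ d)
    (f : Fin k → ℕ) (hf : Function.Injective f)
    (hind : ∀ i : Fin k,
      {j : Fin k | f i < f j ∧ (closedBall (p i) (r i) ∩ closedBall (p j) (r j)).Nonempty}.ncard
        ≤ 9 * d) :
    {S : Finset (Fin k) | S.Nonempty ∧ (⋂ i ∈ S, closedBall (p i) (r i)).Nonempty}.ncard
      ≤ k * d * Nat.choose (9 * d) (d - 1) := by
  have h := ncard_intersectingSets_le (fun i => closedBall (p i) (r i)) hf hply hind (by omega)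
  rwa [Fintype.card_fin, ← mul_assoc] at h
end

section
/- A graph obtained from a perfect graph H by replacing each vertex v of H with an independent set I_v (where each vertex of I_u is adjacent to each vertex of I_v whenever uv is an edge of H, and there are no edges within any I_v) is perfect. -/
open SimpleGraph

/-- A graph is perfect if every induced subgraph has chromatic number equal to its
clique number. -/
def SimpleGraph.IsPerfect {V : Type*} (G : SimpleGraph V) : Prop :=
  ∀ s : Set V, (G.induce s).chromaticNumber = ((G.induce s).cliqueNum : ℕ∞)

/-- The blow-up of `H` replacing each vertex `v` by an independent set of `m v`
vertices, where all cross edges between the blobs of adjacent vertices are added. -/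
def blowup {α : Type*} (H : SimpleGraph α) (m : α → ℕ) :
    SimpleGraph (Σ v : α, Fin (m v)) where
  Adj a b := H.Adj a.1 b.1
  symm := ⟨fun a b h => H.adj_symm h⟩
  loopless := ⟨fun a => H.irrefl⟩

/-!
The blow-up of `H` is `H.comap Sigma.fst`, and more generally every pullback `H.comap p` of a
perfect graph is perfect. On a vertex set `s`, the projection `p` and any section of it over
`p '' s` are homomorphisms in both directions between `(H.comap p).induce s` and
`H.induce (p '' s)`. Graphs with homomorphisms both ways have the same clique sizes (a
homomorphism is injective on cliques) and the same chromatic number, so perfection of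
`H.induce (p '' s)` transfers.
-/

namespace SimpleGraph

variable {V W : Type*} {G : SimpleGraph V} {G' : SimpleGraph W}

theorem IsNClique.image_of_hom [DecidableEq W] {n : ℕ} {s : Finset V} (f : G →g G')
    (h : G.IsNClique n s) : G'.IsNClique n (s.image f) := by
  have hinj : Set.InjOn f s := fun x hx y hy hxy => by
    by_contra hne
    exact G'.irrefl (hxy ▸ f.map_adj (h.isClique hx hy hne))
  refine ⟨?_, by rw [Finset.card_image_of_injOn hinj, h.card_eq]⟩
  simp only [Finset.coe_image]
  rintro _ ⟨x, hx, rfl⟩ _ ⟨y, hy, rfl⟩ hne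
  exact f.map_adj (h.isClique hx hy fun hxy => hne (hxy ▸ rfl))

theorem cliqueNum_eq_of_hom (f : G →g G') (g : G' →g G) : G.cliqueNum = G'.cliqueNum := by
  classical
  refine congrArg sSup (Set.ext fun n => ⟨?_, ?_⟩)
  · rintro ⟨s, hs⟩
    exact ⟨_, hs.image_of_hom f⟩
  · rintro ⟨s, hs⟩
    exact ⟨_, hs.image_of_hom g⟩

theorem chromaticNumber_eq_of_hom (f : G →g G') (g : G' →g G) :
    G.chromaticNumber = G'.chromaticNumber :=
  le_antisymm (chromaticNumber_mono_of_hom f) (chromaticNumber_mono_of_hom g)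

theorem chromaticNumber_eq_cliqueNum_of_hom
    (hG' : G'.chromaticNumber = G'.cliqueNum) (f : G →g G') (g : G' →g G) :
    G.chromaticNumber = G.cliqueNum := by
  rw [chromaticNumber_eq_of_hom f g, hG', cliqueNum_eq_of_hom f g]

variable (H : SimpleGraph W) (p : V → W) (s : Set V)

def comapInduceHom : (H.comap p).induce s →g H.induce (p '' s) where
  toFun x := ⟨p x, Set.mem_image_of_mem p x.2⟩
  map_rel' h := h

noncomputable def induceImageHom : H.induce (p '' s) →g (H.comap p).induce s where
  toFun y := ⟨y.2.choose, y.2.choose_spec.1⟩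
  map_rel' {y z} h := by
    change H.Adj (p y.2.choose) (p z.2.choose)
    rwa [y.2.choose_spec.2, z.2.choose_spec.2]

variable {H}

theorem IsPerfect.comap (hH : H.IsPerfect) : (H.comap p).IsPerfect := fun s =>
  chromaticNumber_eq_cliqueNum_of_hom (hH (p '' s)) (comapInduceHom H p s) (induceImageHom H p s)

end SimpleGraph

theorem blowup_eq_comap {α : Type*} (H : SimpleGraph α) (m : α → ℕ) :
    blowup H m = H.comap Sigma.fst :=
  rfl

theorem blowup_isPerfect_general {α : Type*} (H : SimpleGraph α) (m : α → ℕ)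
    (hH : H.IsPerfect) : (blowup H m).IsPerfect :=
  blowup_eq_comap H m ▸ hH.comap Sigma.fst

/-- Replacing each vertex of a perfect graph by an independent set yields a perfect
graph. -/
theorem blowup_isPerfect {α : Type*} [Fintype α] (H : SimpleGraph α) (m : α → ℕ)
    (hH : H.IsPerfect) : (blowup H m).IsPerfect :=
  blowup_isPerfect_general H m hH
end

section
/- Every integer vector c in the lattice kernel of an integer matrix A (i.e., Ac = 0, c ≠ 0) can be written as a finite conformal sum c = Σ gᵢ of Graver basis elements gᵢ of A, where each gᵢ lies in the same orthant as c (i.e., gᵢ ⊑ c componentwise in sign and absolute value). -/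
/-- ConformalLE (sign-compatible) partial order on integer vectors: `u ⊑ v` iff `u` lies
in the same orthant as `v` and is componentwise dominated in absolute value. -/
def ConformalLE {n : ℕ} (u v : Fin n → ℤ) : Prop :=
  ∀ i, 0 ≤ u i * v i ∧ |u i| ≤ |v i|

/-- The Graver basis of an integer matrix `A`: the `⊑`-minimal nonzero integer vectors
in the kernel of `A`. -/
def GraverBasis {m n : ℕ} (A : Matrix (Fin m) (Fin n) ℤ) : Set (Fin n → ℤ) :=
  {g | A.mulVec g = 0 ∧ g ≠ 0 ∧
    ∀ h : Fin n → ℤ, A.mulVec h = 0 → h ≠ 0 → ConformalLE h g → h = g}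

/-!
If `c` is not itself a Graver basis element, some nonzero kernel vector `h ≠ c` satisfies
`h ⊑ c`, and then `c - h ⊑ c` as well. Conformality makes the `ℓ¹`-norm additive,
`‖c‖₁ = ‖h‖₁ + ‖c - h‖₁`, so both parts are strictly shorter than `c`; decomposing them
recursively and concatenating the decompositions gives one of `c`, by transitivity of `⊑`.
-/

lemma int_conformal_iff (a b : ℤ) :
    0 ≤ a * b ∧ |a| ≤ |b| ↔ 0 ≤ a ∧ a ≤ b ∨ b ≤ a ∧ a ≤ 0 := by
  rw [mul_nonneg_iff]
  constructor
  · rintro ⟨h | h, hab⟩ <;> [left; right] <;> grind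
  · grind

namespace ConformalLE

variable {n : ℕ} {u v w : Fin n → ℤ}

lemma refl (v : Fin n → ℤ) : ConformalLE v v :=
  fun i => (int_conformal_iff _ _).2 (by omega)

lemma trans (huv : ConformalLE u v) (hvw : ConformalLE v w) : ConformalLE u w := by
  intro i
  have := (int_conformal_iff _ _).1 (huv i)
  have := (int_conformal_iff _ _).1 (hvw i)
  exact (int_conformal_iff _ _).2 (by omega)

lemma sub_left (huv : ConformalLE u v) : ConformalLE (v - u) v := by
  intro i
  have := (int_conformal_iff _ _).1 (huv i)
  exact (int_conformal_iff _ _).2 (by simp only [Pi.sub_apply]; omega)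

lemma sum_natAbs_sub_add (huv : ConformalLE u v) :
    ∑ i, (v i - u i).natAbs + ∑ i, (u i).natAbs = ∑ i, (v i).natAbs := by
  rw [← Finset.sum_add_distrib]
  refine Finset.sum_congr rfl fun i _ => ?_
  have := (int_conformal_iff _ _).1 (huv i)
  omega

end ConformalLE

lemma sum_natAbs_pos {n : ℕ} {v : Fin n → ℤ} (hv : v ≠ 0) : 0 < ∑ i, (v i).natAbs := by
  obtain ⟨i, hi⟩ := Function.ne_iff.1 hv
  exact Finset.sum_pos' (fun _ _ => Nat.zero_le _) ⟨i, Finset.mem_univ i, Int.natAbs_pos.2 hi⟩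

lemma exists_conformalLE_of_notMem_graverBasis {m n : ℕ} {A : Matrix (Fin m) (Fin n) ℤ}
    {c : Fin n → ℤ} (hc : A.mulVec c = 0) (hc0 : c ≠ 0) (hG : c ∉ GraverBasis A) :
    ∃ h, A.mulVec h = 0 ∧ h ≠ 0 ∧ h ≠ c ∧ ConformalLE h c := by
  by_contra! hmin
  exact hG ⟨hc, hc0, fun h hh hh0 hhc => by_contra fun hne => hmin h hh hh0 hne hhc⟩

def IsConformalGraverSum {m n : ℕ} (A : Matrix (Fin m) (Fin n) ℤ) (c : Fin n → ℤ) : Prop :=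
  ∃ (k : ℕ) (g : Fin k → (Fin n → ℤ)),
    (∀ i, g i ∈ GraverBasis A) ∧ (∀ i, ConformalLE (g i) c) ∧ c = ∑ i, g i

namespace IsConformalGraverSum

variable {m n : ℕ} {A : Matrix (Fin m) (Fin n) ℤ}

lemma zero : IsConformalGraverSum A 0 :=
  ⟨0, Fin.elim0, fun i => i.elim0, fun i => i.elim0, by simp⟩

lemma of_mem {g : Fin n → ℤ} (hg : g ∈ GraverBasis A) : IsConformalGraverSum A g :=
  ⟨1, fun _ => g, fun _ => hg, fun _ => ConformalLE.refl g, by simp⟩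

lemma add {u v : Fin n → ℤ} (hu : IsConformalGraverSum A u) (hv : IsConformalGraverSum A v)
    (hu' : ConformalLE u (u + v)) (hv' : ConformalLE v (u + v)) :
    IsConformalGraverSum A (u + v) := by
  obtain ⟨k, g, hg, hgu, rfl⟩ := hu
  obtain ⟨l, f, hf, hfv, rfl⟩ := hv
  refine ⟨k + l, Fin.append g f, ?_, ?_, by simp [Fin.sum_univ_add]⟩
  · exact Fin.addCases (by simpa using hg) (by simpa using hf)
  · exact Fin.addCases (by simpa using fun i => (hgu i).trans hu')
      (by simpa using fun i => (hfv i).trans hv')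

end IsConformalGraverSum

theorem isConformalGraverSum_of_mulVec_eq_zero {m n : ℕ} (A : Matrix (Fin m) (Fin n) ℤ)
    (c : Fin n → ℤ) (hc : A.mulVec c = 0) : IsConformalGraverSum A c := by
  by_cases hc0 : c = 0
  · exact hc0 ▸ IsConformalGraverSum.zero
  by_cases hG : c ∈ GraverBasis A
  · exact IsConformalGraverSum.of_mem hG
  obtain ⟨h, hh, hh0, hhc, hconf⟩ := exists_conformalLE_of_notMem_graverBasis hc hc0 hG
  have hrest : A.mulVec (c - h) = 0 := by rw [Matrix.mulVec_sub, hc, hh, sub_zero]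
  -- these three facts discharge the termination goals
  have hsplit := hconf.sum_natAbs_sub_add
  have hpos := sum_natAbs_pos hh0
  have hpos' : 0 < ∑ i, (c i - h i).natAbs := sum_natAbs_pos (sub_ne_zero.2 (Ne.symm hhc))
  have hsum : IsConformalGraverSum A (h + (c - h)) :=
    (isConformalGraverSum_of_mulVec_eq_zero A h hh).add
      (isConformalGraverSum_of_mulVec_eq_zero A (c - h) hrest)
      (by simpa using hconf) (by simpa using hconf.sub_left)
  simpa using hsum
termination_by ∑ i, (c i).natAbs

theorem kernel_eq_conformal_sum_graver_general {m n : ℕ} (A : Matrix (Fin m) (Fin n) ℤ)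
    (c : Fin n → ℤ) (hc : A.mulVec c = 0) :
    ∃ (k : ℕ) (g : Fin k → (Fin n → ℤ)),
      (∀ i, g i ∈ GraverBasis A) ∧ (∀ i, ConformalLE (g i) c) ∧ c = ∑ i, g i :=
  isConformalGraverSum_of_mulVec_eq_zero A c hc

/-- Every nonzero integer vector in the kernel of `A` is a finite conformal sum of
Graver basis elements of `A`. -/
theorem kernel_eq_conformal_sum_graver {m n : ℕ} (A : Matrix (Fin m) (Fin n) ℤ)
    (c : Fin n → ℤ) (hc : A.mulVec c = 0) (hc0 : c ≠ 0) :
    ∃ (k : ℕ) (g : Fin k → (Fin n → ℤ)),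
      (∀ i, g i ∈ GraverBasis A) ∧ (∀ i, ConformalLE (g i) c) ∧ c = ∑ i, g i :=
  kernel_eq_conformal_sum_graver_general A c hc
end
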